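/- arXiv:2007.08966 — 2 statements merged into one kernel-verified Lean document; each statement's English description precedes it below -/
import Mathlib

section
/- Let g ≥ 1 and f(x) = x^{2g+1} + Σ_{k=0}^{2g−1} λ_{2(2g+1−k)} x^k. For 1 ≤ i ≤ g define R_i(x) = x^{g−i+1} ∂_x q(f(x), x^{2g−2i+2}), where q(a,b) denotes the quotient of Euclidean division of a by b. Then R_1(x) = x^g, and for every i the polynomial R_i has degree at most g+i−1 in x. -/
open Polynomial

noncomputable section

/-- `lamP g j` represents `λ_{2j}` in `ℚ[λ_4, …, λ_{4g+2}]`, with conventions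
`λ_0 = 1`, `λ_2 = 0`, `λ_s = 0` outside `{0, 4, …, 4g+2}`. -/
def lamP (g j : ℕ) : MvPolynomial ℕ ℚ :=
  if j = 0 then 1 else if 2 ≤ j ∧ j ≤ 2*g+1 then MvPolynomial.X j else 0

/-- `f(x) = x^{2g+1} + Σ_{k=0}^{2g−1} λ_{2(2g+1−k)} x^k`. -/
def fHyp (g : ℕ) : Polynomial (MvPolynomial ℕ ℚ) :=
  X ^ (2*g+1) + ∑ k ∈ Finset.range (2*g), C (lamP g (2*g+1-k)) * X ^ k

/-- `R_i(x) = x^{g−i+1} ∂_x q(f(x), x^{2g−2i+2})`, where `q` is the quotient of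
Euclidean division by the monic polynomial `x^{2g−2i+2}`. -/
def Rpol (g i : ℕ) : Polynomial (MvPolynomial ℕ ℚ) :=
  X ^ (g - i + 1) * derivative (fHyp g /ₘ X ^ (2*g - 2*i + 2))

theorem Polynomial.degree_sum_range_C_mul_X_pow_lt {R : Type*} [Semiring R] (a : ℕ → R) (n : ℕ) :
    (∑ k ∈ Finset.range n, C (a k) * X ^ k).degree < (n : WithBot ℕ) := by
  simpa only [Fin.sum_univ_eq_sum_range (fun k => C (a k) * X ^ k)] using
    degree_sum_fin_lt (fun k : Fin n => a k)

theorem Polynomial.mul_add_divByMonic_of_degree_lt {R : Type*} [Ring R] {q r : R[X]} (p : R[X])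
    (hq : q.Monic) (hr : r.degree < q.degree) : (q * p + r) /ₘ q = p :=
  (div_modByMonic_unique p r hq ⟨add_comm _ _, hr⟩).1

theorem Polynomial.natDegree_derivative_divByMonic_le {R : Type*} [Ring R] (p : R[X]) {q : R[X]}
    (hq : q.Monic) : (derivative (p /ₘ q)).natDegree ≤ p.natDegree - q.natDegree - 1 := by
  simpa only [natDegree_divByMonic p hq] using natDegree_derivative_le (p /ₘ q)

theorem fHyp_eq_X_pow_mul_X_add (g : ℕ) :
    fHyp g = X ^ (2*g) * X + ∑ k ∈ Finset.range (2*g), C (lamP g (2*g+1-k)) * X ^ k := by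
  rw [fHyp, pow_succ]

theorem fHyp_divByMonic_X_pow (g : ℕ) : fHyp g /ₘ X ^ (2*g) = X := by
  rw [fHyp_eq_X_pow_mul_X_add, mul_add_divByMonic_of_degree_lt _ (monic_X_pow _)]
  simpa only [degree_X_pow] using degree_sum_range_C_mul_X_pow_lt _ _

theorem natDegree_fHyp_le (g : ℕ) : (fHyp g).natDegree ≤ 2*g+1 :=
  natDegree_add_le_of_degree_le (natDegree_X_pow_le _) <| natDegree_le_of_degree_le <|
    (degree_sum_range_C_mul_X_pow_lt _ _).le.trans (by exact_mod_cast Nat.le_succ (2*g))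

theorem natDegree_Rpol_le {g i : ℕ} (hi : 1 ≤ i) (hig : i ≤ g) : (Rpol g i).natDegree ≤ g + i - 1 := by
  have hderiv := natDegree_derivative_divByMonic_le (fHyp g) (monic_X_pow (2*g - 2*i + 2))
  rw [natDegree_X_pow] at hderiv
  calc (Rpol g i).natDegree
      ≤ (g - i + 1) + (derivative (fHyp g /ₘ X ^ (2*g - 2*i + 2))).natDegree :=
        natDegree_mul_le.trans (Nat.add_le_add_right (natDegree_X_pow_le _) _)
    _ ≤ g + i - 1 := by have := natDegree_fHyp_le g; omega

/-- `R_1(x) = x^g`, and for every `1 ≤ i ≤ g` the polynomial `R_i` has degree at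
most `g + i − 1` in `x`. -/
theorem Rpol_one_and_degree (g : ℕ) (hg : 1 ≤ g) :
    Rpol g 1 = X ^ g ∧ ∀ i : ℕ, 1 ≤ i → i ≤ g → (Rpol g i).degree ≤ ((g + i - 1 : ℕ) : WithBot ℕ) := by
  refine ⟨?_, fun i hi hig => degree_le_of_natDegree_le (natDegree_Rpol_le hi hig)⟩
  rw [Rpol, show 2*g - 2*1 + 2 = 2*g by omega, show g - 1 + 1 = g by omega,
    fHyp_divByMonic_X_pow, derivative_X, mul_one]

end
end

section
/- For the genus-1 Schrödinger operators Q_0 = L_0 − (z∂_z − 1) and Q_2 = L_2 − ((1/2)∂_z² − (1/6)λ_4 z²), acting on the ring ℚ[λ_4, λ_6][z] (with L_0 = 4λ_4 ∂/∂λ_4 + 6λ_6 ∂/∂λ_6 and L_2 = 6λ_6 ∂/∂λ_4 − (4/3)λ_4² ∂/∂λ_6), one has the commutation relation [Q_0, Q_2] = 2 Q_2. -/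
open MvPolynomial

noncomputable section

lemma pderiv_comm' (i j : Fin 3) (p : MvPolynomial (Fin 3) ℚ) :
    pderiv i (pderiv j p) = pderiv j (pderiv i p) := by
  induction p using MvPolynomial.induction_on with
  | C a => simp
  | add p q hp hq => simp [hp, hq]
  | mul_X p n hp =>
    simp only [pderiv_mul, map_add, pderiv_mul, hp, pderiv_X, Pi.single_apply]
    by_cases h1 : j = n <;> by_cases h2 : i = n <;>
      simp [h1, h2] <;> split_ifs with h <;> simp_all

/-- Variables: `X 0 = λ_4`, `X 1 = λ_6`, `X 2 = z` in `ℚ[λ_4, λ_6, z]`. -/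
def L0g1 (p : MvPolynomial (Fin 3) ℚ) : MvPolynomial (Fin 3) ℚ :=
  C 4 * X 0 * pderiv 0 p + C 6 * X 1 * pderiv 1 p

def L2g1 (p : MvPolynomial (Fin 3) ℚ) : MvPolynomial (Fin 3) ℚ :=
  C 6 * X 1 * pderiv 0 p - C (4/3) * X 0 ^ 2 * pderiv 1 p

/-- `Q_0 = L_0 − (z ∂_z − 1)`. -/
def Q0g1 (p : MvPolynomial (Fin 3) ℚ) : MvPolynomial (Fin 3) ℚ :=
  L0g1 p - (X 2 * pderiv 2 p - p)

/-- `Q_2 = L_2 − ((1/2) ∂_z² − (1/6) λ_4 z²)`. -/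
def Q2g1 (p : MvPolynomial (Fin 3) ℚ) : MvPolynomial (Fin 3) ℚ :=
  L2g1 p - (C (1/2) * pderiv 2 (pderiv 2 p) - C (1/6) * X 0 * X 2 ^ 2 * p)

/-- For the genus-1 Schrödinger operators, `[Q_0, Q_2] = 2 Q_2`. -/
theorem Q0_Q2_commutator_g1 (p : MvPolynomial (Fin 3) ℚ) :
    Q0g1 (Q2g1 p) - Q2g1 (Q0g1 p) = (2 : ℚ) • Q2g1 p := by
  have h01 : pderiv 0 (pderiv 1 p) = pderiv 1 (pderiv 0 p) := pderiv_comm' 0 1 p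
  have h02 : pderiv 0 (pderiv 2 p) = pderiv 2 (pderiv 0 p) := pderiv_comm' 0 2 p
  have h12 : pderiv 1 (pderiv 2 p) = pderiv 2 (pderiv 1 p) := pderiv_comm' 1 2 p
  have h022 : pderiv 0 (pderiv 2 (pderiv 2 p)) = pderiv 2 (pderiv 2 (pderiv 0 p)) := by
    rw [pderiv_comm' 0 2, pderiv_comm' 0 2]
  have h122 : pderiv 1 (pderiv 2 (pderiv 2 p)) = pderiv 2 (pderiv 2 (pderiv 1 p)) := by
    rw [pderiv_comm' 1 2, pderiv_comm' 1 2]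
  simp only [Q0g1, Q2g1, L0g1, L2g1, map_sub, map_add, pderiv_mul, pderiv_C, pderiv_X,
    Pi.single_apply, smul_eq_C_mul, h01, h02, h12, h022, h122]
  simp [Pi.single_apply, map_ofNat]
  ring

end
end
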